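/- arXiv:1209.4073 — 3 statements merged into one kernel-verified Lean document; each statement's English description precedes it below -/
import Mathlib

section
/- Let M be a nonnegative square matrix in block upper-triangular form M = [[A, C],[0, B]] where A and B are square blocks. If M has a strictly positive left eigenvector with eigenvalue λ, then the spectral radius of every diagonal block is at most λ. -/
/-!
If `w > 0` satisfies `wᵀ A ≤ λ wᵀ` for a nonnegative matrix `A`, and `A x = z x` with `x ≠ 0`,
the triangle inequality gives `‖z‖ |x| ≤ A |x|` componentwise; pairing with `w` yields
`‖z‖ (w ⬝ |x|) ≤ (wᵀ A) ⬝ |x| ≤ λ (w ⬝ |x|)` with `w ⬝ |x| > 0`. A positive left eigenvector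
of `M` restricts to such a `w` for every principal submatrix, since the dropped terms of
`vᵀ M` are nonnegative.
-/

open Function

namespace Matrix

variable {ι κ : Type*} [Fintype ι]

lemma exists_mulVec_eq_smul_of_mem_spectrum {K : Type*} [Field K] [DecidableEq ι]
    {A : Matrix ι ι K} {z : K}
    (hz : z ∈ spectrum K A) : ∃ x ≠ 0, A *ᵥ x = z • x := by
  rw [← spectrum_toLin', ← Module.End.hasEigenvalue_iff_mem_spectrum] at hz
  obtain ⟨x, hx, hx0⟩ := hz.exists_hasEigenvector
  exact ⟨x, hx0, by simpa using Module.End.mem_eigenspace_iff.mp hx⟩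

lemma norm_mul_norm_le_mulVec_norm {B : Matrix ι ι ℝ} (hB : ∀ i j, 0 ≤ B i j) {z : ℂ}
    {x : ι → ℂ} (hx : B.map Complex.ofReal *ᵥ x = z • x) (j : ι) :
    ‖z‖ * ‖x j‖ ≤ (B *ᵥ fun k => ‖x k‖) j := by
  calc ‖z‖ * ‖x j‖ = ‖∑ k, (B j k : ℂ) * x k‖ := by
        rw [← norm_mul, ← smul_eq_mul, ← Pi.smul_apply, ← hx]; rfl
    _ ≤ ∑ k, ‖(B j k : ℂ) * x k‖ := norm_sum_le _ _
    _ = (B *ᵥ fun k => ‖x k‖) j := by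
        simp only [norm_mul, Complex.norm_real, Real.norm_of_nonneg (hB _ _)]; rfl

theorem norm_le_of_mem_spectrum_of_vecMul_le [DecidableEq ι] {B : Matrix ι ι ℝ}
    (hB : ∀ i j, 0 ≤ B i j) {lam : ℝ} {w : ι → ℝ} (hw : ∀ i, 0 < w i) (hle : w ᵥ* B ≤ lam • w) {z : ℂ}
    (hz : z ∈ spectrum ℂ (B.map Complex.ofReal)) : ‖z‖ ≤ lam := by
  obtain ⟨x, hx0, hx⟩ := exists_mulVec_eq_smul_of_mem_spectrum hz
  set y : ι → ℝ := fun k => ‖x k‖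
  have hy : 0 ≤ y := fun k => norm_nonneg _
  have hwy : 0 < w ⬝ᵥ y := by
    obtain ⟨j, hj⟩ := ne_iff.mp hx0
    exact Finset.sum_pos' (fun i _ => mul_nonneg (hw i).le (hy i))
      ⟨j, Finset.mem_univ j, mul_pos (hw j) (norm_pos_iff.mpr hj)⟩
  refine le_of_mul_le_mul_right ?_ hwy
  calc ‖z‖ * (w ⬝ᵥ y) = w ⬝ᵥ (‖z‖ • y) := by rw [dotProduct_smul, smul_eq_mul]
    _ ≤ w ⬝ᵥ (B *ᵥ y) := dotProduct_le_dotProduct_of_nonneg_left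
        (fun j => norm_mul_norm_le_mulVec_norm hB hx j) (fun i => (hw i).le)
    _ = (w ᵥ* B) ⬝ᵥ y := dotProduct_mulVec _ _ _
    _ ≤ (lam • w) ⬝ᵥ y := dotProduct_le_dotProduct_of_nonneg_right hle hy
    _ = lam * (w ⬝ᵥ y) := by rw [smul_dotProduct, smul_eq_mul]

lemma vecMul_submatrix_le [Fintype κ] {M : Matrix κ κ ℝ} (hM : ∀ i j, 0 ≤ M i j)
    {v : κ → ℝ} (hv : 0 ≤ v) {e : ι → κ} (he : Injective e) (f : ι → κ) :
    (v ∘ e) ᵥ* M.submatrix e f ≤ (v ᵥ* M) ∘ f := fun j => by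
  calc ∑ i, v (e i) * M (e i) (f j) = ∑ k ∈ Finset.univ.map ⟨e, he⟩, v k * M k (f j) := by
        rw [Finset.sum_map]; rfl
    _ ≤ ∑ k, v k * M k (f j) :=
        Finset.sum_le_univ_sum_of_nonneg fun k => mul_nonneg (hv k) (hM k (f j))

theorem norm_le_of_mem_spectrum_submatrix [DecidableEq ι] [Fintype κ] {M : Matrix κ κ ℝ}
    (hM : ∀ i j, 0 ≤ M i j) {lam : ℝ} {v : κ → ℝ} (hv : ∀ i, 0 < v i)
    (heig : v ᵥ* M = lam • v) {e : ι → κ} (he : Injective e) {z : ℂ}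
    (hz : z ∈ spectrum ℂ ((M.submatrix e e).map Complex.ofReal)) : ‖z‖ ≤ lam :=
  norm_le_of_mem_spectrum_of_vecMul_le (fun _ _ => hM _ _) (fun _ => hv _)
    (heig ▸ vecMul_submatrix_le hM (fun i => (hv i).le) he e) hz

end Matrix

theorem spectral_radius_of_blocks_le_of_positive_left_eigenvector_general
    {m n : Type*} [Fintype m] [Fintype n] [DecidableEq m] [DecidableEq n]
    (M : Matrix (m ⊕ n) (m ⊕ n) ℝ)
    (hnonneg : ∀ i j, 0 ≤ M i j)
    (lam : ℝ) (v : (m ⊕ n) → ℝ)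
    (hvpos : ∀ i, 0 < v i)
    (heig : Matrix.vecMul v M = lam • v) :
    (∀ z ∈ spectrum ℂ ((M.submatrix Sum.inl Sum.inl).map Complex.ofReal),
        ‖z‖ ≤ lam) ∧
    (∀ z ∈ spectrum ℂ ((M.submatrix Sum.inr Sum.inr).map Complex.ofReal),
        ‖z‖ ≤ lam) :=
  ⟨fun _ => Matrix.norm_le_of_mem_spectrum_submatrix hnonneg hvpos heig Sum.inl_injective,
    fun _ => Matrix.norm_le_of_mem_spectrum_submatrix hnonneg hvpos heig Sum.inr_injective⟩

/-- If a nonnegative block upper-triangular matrix `M = [[A, C], [0, B]]` has a strictly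
positive left eigenvector `v` with eigenvalue `λ`, then the spectral radius of each
diagonal block (`A` and `B`) is at most `λ`: every complex eigenvalue of each block has
modulus at most `λ`. -/
theorem spectral_radius_of_blocks_le_of_positive_left_eigenvector
    {m n : Type*} [Fintype m] [Fintype n] [DecidableEq m] [DecidableEq n]
    (M : Matrix (m ⊕ n) (m ⊕ n) ℝ)
    (hnonneg : ∀ i j, 0 ≤ M i j)
    (hblock : ∀ i j, M (Sum.inr i) (Sum.inl j) = 0)
    (lam : ℝ) (v : (m ⊕ n) → ℝ)
    (hvpos : ∀ i, 0 < v i)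
    (heig : Matrix.vecMul v M = lam • v) :
    (∀ z ∈ spectrum ℂ ((M.submatrix Sum.inl Sum.inl).map Complex.ofReal),
        ‖z‖ ≤ lam) ∧
    (∀ z ∈ spectrum ℂ ((M.submatrix Sum.inr Sum.inr).map Complex.ofReal),
        ‖z‖ ≤ lam) :=
  spectral_radius_of_blocks_le_of_positive_left_eigenvector_general M hnonneg lam v hvpos heig
end

section
/- Let S be the edge shift on a finite directed graph G with primitive incidence matrix Bᵗ and Parry measure ν̄, and fix for each vertex Q one distinguished outgoing edge e_Q. Then the set of two-sided paths (e_n)_{n∈ℤ} that use distinguished edges only finitely many times among negative indices n < 0 has ν̄-measure zero. -/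
/-!
Let `G` count the edges that are not distinguished. Every vertex loses an outgoing edge and every
entry of `B ^ k` is positive, so each entry of `G ^ (k + 1)` is at least one below the
corresponding entry of `B ^ (k + 1)`; against the positive eigenvector `u` this gives
`G ^ (k + 1) u ≤ (r ^ (k + 1) - 1) u`. For every `n`, the paths avoiding distinguished edges at
all negative times lie in the cylinders over the `G`-admissible words on `[-n, -1]`, of total
Parry mass `v ⬝ G ^ n u / r ^ n`, which decays geometrically; so that set is null. By shift
invariance so is the set of paths avoiding distinguished edges before any fixed time `t`, and a
path with only finitely many distinguished edges at negative times is of this kind for some `t`.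
-/

open MeasureTheory Finset Matrix Filter Topology

namespace Matrix

section OrderedSemiring

variable {m n R : Type*} [Fintype n] [CommSemiring R] [PartialOrder R] [IsOrderedRing R]

theorem mulVec_le_mulVec {A : Matrix m n R} (hA : ∀ i j, 0 ≤ A i j) {x y : n → R}
    (hxy : x ≤ y) : A *ᵥ x ≤ A *ᵥ y :=
  fun i => dotProduct_le_dotProduct_of_nonneg_left hxy (hA i)

theorem pow_apply_le_pow_apply [DecidableEq n] {A B : Matrix n n R} (hA : ∀ i j, 0 ≤ A i j)
    (hAB : ∀ i j, A i j ≤ B i j) (k : ℕ) (i j : n) : (A ^ k) i j ≤ (B ^ k) i j := by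
  induction k generalizing j with
  | zero => rfl
  | succ k ih =>
    simp only [pow_succ, mul_apply]
    exact sum_le_sum fun l _ => mul_le_mul (ih l) (hAB l j) (hA l j)
      ((pow_apply_nonneg hA k i l).trans (ih l))

theorem pow_mulVec_le_pow_smul [DecidableEq n] {A : Matrix n n R} (hA : ∀ i j, 0 ≤ A i j)
    {x : n → R} {c : R} (hc : 0 ≤ c) (h : A *ᵥ x ≤ c • x) (m : ℕ) :
    A ^ m *ᵥ x ≤ c ^ m • x := by
  induction m with
  | zero => simp
  | succ m ih =>
    calc A ^ (m + 1) *ᵥ x = A ^ m *ᵥ (A *ᵥ x) := by rw [pow_succ, mulVec_mulVec]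
      _ ≤ A ^ m *ᵥ (c • x) := mulVec_le_mulVec (pow_apply_nonneg hA m) h
      _ = c • (A ^ m *ᵥ x) := mulVec_smul _ c x
      _ ≤ c • (c ^ m • x) := smul_le_smul_of_nonneg_left ih hc
      _ = c ^ (m + 1) • x := by rw [smul_smul, pow_succ']

end OrderedSemiring

section LinearOrderedRing

variable {n R : Type*} [Fintype n] [CommRing R] [LinearOrder R] [IsStrictOrderedRing R]

theorem mulVec_apply_add_le {A B : Matrix n n R} (h : ∀ i j, A i j + 1 ≤ B i j) {x : n → R}
    (hx : 0 ≤ x) (i : n) : (A *ᵥ x) i + x i ≤ (B *ᵥ x) i := by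
  have : x i ≤ ((B - A) *ᵥ x) i :=
    calc x i ≤ ∑ j, x j := single_le_sum (fun j _ => hx j) (mem_univ i)
      _ ≤ ∑ j, (B - A) i j * x j :=
          sum_le_sum fun j _ => le_mul_of_one_le_left (hx j) (by rw [sub_apply]; linarith [h i j])
  rw [sub_mulVec, Pi.sub_apply] at this
  linarith

theorem pow_succ_apply_add_one_le [DecidableEq n] {A B : Matrix n n R} (hA : ∀ i j, 0 ≤ A i j)
    (hAB : ∀ i j, A i j ≤ B i j) (hgap : ∀ j, ∃ i, A i j + 1 ≤ B i j) {k : ℕ}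
    (hBk : ∀ i j, 1 ≤ (B ^ k) i j) (i j : n) : (A ^ (k + 1)) i j + 1 ≤ (B ^ (k + 1)) i j := by
  obtain ⟨l, hl⟩ := hgap j
  have hAk : (A ^ k * A) i j ≤ (B ^ k * A) i j := by
    simp only [mul_apply]
    exact sum_le_sum fun p _ =>
      mul_le_mul_of_nonneg_right (pow_apply_le_pow_apply hA hAB k i p) (hA p j)
  have hdiff : 1 ≤ (B ^ k * (B - A)) i j :=
    calc (1 : R) ≤ (B ^ k) i l * (B - A) l j :=
          one_le_mul_of_one_le_of_one_le (hBk i l) (by rw [sub_apply]; linarith)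
      _ ≤ (B ^ k * (B - A)) i j := by
          rw [mul_apply]
          exact single_le_sum (f := fun p => (B ^ k) i p * (B - A) p j)
            (fun p _ => mul_nonneg (zero_le_one.trans (hBk i p)) (sub_nonneg.2 (hAB p j)))
            (mem_univ l)
  rw [Matrix.mul_sub, sub_apply] at hdiff
  rw [pow_succ, pow_succ]
  linarith

end LinearOrderedRing

end Matrix

namespace EdgeShift

section Words

variable {V E : Type*} [Fintype E] (src rng : E → V)

open Classical in
noncomputable def edgeMatrix (R : Type*) [Semiring R] (S : Set E) : Matrix V V R :=
  of fun j i => (#{e | e ∈ S ∧ src e = i ∧ rng e = j} : R)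

open Classical in
noncomputable def pathWords (S : Set E) (n : ℕ) : Finset (Fin (n + 1) → E) :=
  {w | (∀ i : Fin n, src (w i.succ) = rng (w i.castSucc)) ∧ ∀ i, w i ∈ S}

variable {src rng}

open Classical in
theorem edgeMatrix_apply (R : Type*) [Semiring R] (S : Set E) (j i : V) :
    edgeMatrix src rng R S j i = #{e | e ∈ S ∧ src e = i ∧ rng e = j} :=
  rfl

theorem mem_pathWords {S : Set E} {n : ℕ} {w : Fin (n + 1) → E} :
    w ∈ pathWords src rng S n ↔
      (∀ i : Fin n, src (w i.succ) = rng (w i.castSucc)) ∧ ∀ i, w i ∈ S := by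
  simp [pathWords]

theorem cons_mem_pathWords {S : Set E} {n : ℕ} {e : E} {w : Fin (n + 1) → E} :
    Fin.cons e w ∈ pathWords src rng S (n + 1) ↔
      e ∈ S ∧ src (w 0) = rng e ∧ w ∈ pathWords src rng S n := by
  simp only [mem_pathWords, Fin.forall_fin_succ, Fin.cons_zero, Fin.cons_succ,
    Fin.castSucc_zero, ← Fin.succ_castSucc]
  tauto

theorem edgeMatrix_nonneg (S : Set E) (i j : V) : 0 ≤ edgeMatrix src rng ℝ S i j :=
  Nat.cast_nonneg _

theorem one_le_edgeMatrix {S : Set E} {e : E} (he : e ∈ S) :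
    1 ≤ edgeMatrix src rng ℝ S (rng e) (src e) := by
  classical
  rw [edgeMatrix_apply, Nat.one_le_cast, one_le_card]
  exact ⟨e, mem_filter.2 ⟨mem_univ e, he, rfl, rfl⟩⟩

theorem edgeMatrix_add_edgeMatrix_compl (R : Type*) [Semiring R] (S : Set E) :
    edgeMatrix src rng R S + edgeMatrix src rng R Sᶜ = edgeMatrix src rng R Set.univ := by
  classical
  ext j i
  simp only [Matrix.add_apply, edgeMatrix_apply, ← Nat.cast_add, Set.mem_compl_iff,
    Set.mem_univ, true_and]
  rw [← card_filter_add_card_filter_not (s := {e | src e = i ∧ rng e = j}) (· ∈ S),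
    filter_filter, filter_filter]
  congr 3 <;> ext e <;> simp only [mem_filter, mem_univ, true_and] <;> tauto

theorem edgeMatrix_univ_eq_map [DecidableEq V] {R : Type*} [Semiring R] {B : Matrix V V ℕ}
    (hB : ∀ i j, Fintype.card {e : E // src e = i ∧ rng e = j} = B j i) :
    edgeMatrix src rng R Set.univ = B.map Nat.cast := by
  ext j i
  simp [edgeMatrix_apply, ← hB, Fintype.card_subtype]

variable [Fintype V] [DecidableEq V]

open Classical in
theorem mulVec_edgeMatrix_apply {R : Type*} [CommSemiring R] (S : Set E) (f : V → R) (j : V) :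
    (edgeMatrix src rng R S *ᵥ f) j = ∑ e with e ∈ S ∧ rng e = j, f (src e) := by
  rw [← sum_fiberwise' _ src f, mulVec, dotProduct]
  refine sum_congr rfl fun i _ => ?_
  rw [sum_const, filter_filter, nsmul_eq_mul, edgeMatrix_apply]
  congr 3
  ext e
  simp only [mem_filter, mem_univ, true_and]
  tauto

open Classical in
theorem dotProduct_edgeMatrix_mulVec {R : Type*} [CommSemiring R] (S : Set E) (f g : V → R) :
    g ⬝ᵥ (edgeMatrix src rng R S *ᵥ f) = ∑ e with e ∈ S, f (src e) * g (rng e) := by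
  simp only [dotProduct, mulVec_edgeMatrix_apply, mul_sum]
  rw [← sum_fiberwise _ rng]
  refine sum_congr rfl fun j _ => ?_
  rw [filter_filter]
  exact sum_congr rfl fun e he => by rw [(mem_filter.1 he).2.2, mul_comm]

theorem sum_pathWords {R : Type*} [CommSemiring R] (S : Set E) (n : ℕ) (f g : V → R) :
    ∑ w ∈ pathWords src rng S n, f (src (w 0)) * g (rng (w (Fin.last n))) =
      g ⬝ᵥ (edgeMatrix src rng R S ^ (n + 1) *ᵥ f) := by
  classical
  induction n generalizing f with
  | zero =>
    rw [show edgeMatrix src rng R S ^ (0 + 1) = edgeMatrix src rng R S from pow_one _,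
      dotProduct_edgeMatrix_mulVec]
    refine sum_equiv (Equiv.funUnique (Fin 1) E) (fun w => ?_) (fun w _ => rfl)
    simp [pathWords]
  | succ n ih =>
    calc ∑ w ∈ pathWords src rng S (n + 1), f (src (w 0)) * g (rng (w (Fin.last (n + 1))))
        = ∑ w ∈ pathWords src rng S n, (edgeMatrix src rng R S *ᵥ f) (src (w 0)) *
            g (rng (w (Fin.last n))) := by
          rw [← sum_ite_mem_eq (pathWords src rng S (n + 1)),
            ← sum_ite_mem_eq (pathWords src rng S n), ← (Fin.consEquiv fun _ => E).sum_comp,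
            Fintype.sum_prod_type, sum_comm]
          refine sum_congr rfl fun w _ => ?_
          have hcons (e : E) : Fin.consEquiv (fun _ => E) (e, w) ∈ pathWords src rng S (n + 1) ↔
              (e ∈ S ∧ rng e = src (w 0)) ∧ w ∈ pathWords src rng S n := by
            change (Fin.cons e w : Fin (n + 2) → E) ∈ _ ↔ _
            rw [cons_mem_pathWords]
            tauto
          simp only [hcons, ite_and, Fin.consEquiv_apply, Fin.cons_zero, ← Fin.succ_last,
            Fin.cons_succ, mulVec_edgeMatrix_apply, sum_mul, ← sum_filter]
          split_ifs with hw <;> simp [hw, filter_filter]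
      _ = g ⬝ᵥ (edgeMatrix src rng R S ^ (n + 1 + 1) *ᵥ f) := by
          rw [ih, mulVec_mulVec, ← pow_succ]

theorem edgeMatrix_compl_pow_mulVec_le {S : Set E} (hS : ∀ q, ∃ e ∈ S, src e = q) {k : ℕ}
    (hk : ∀ i j, 1 ≤ (edgeMatrix src rng ℝ Set.univ ^ k) i j) {u : V → ℝ} (hu0 : 0 ≤ u)
    {r : ℝ} (hr : 0 ≤ r) (hu : edgeMatrix src rng ℝ Set.univ *ᵥ u ≤ r • u) :
    edgeMatrix src rng ℝ Sᶜ ^ (k + 1) *ᵥ u ≤ (r ^ (k + 1) - 1) • u := by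
  have hsplit (i j : V) : edgeMatrix src rng ℝ Sᶜ i j + edgeMatrix src rng ℝ S i j =
      edgeMatrix src rng ℝ Set.univ i j := by
    rw [← edgeMatrix_add_edgeMatrix_compl ℝ S, Matrix.add_apply, add_comm]
  have hgap := pow_succ_apply_add_one_le (edgeMatrix_nonneg Sᶜ)
    (fun i j => by linarith [hsplit i j, edgeMatrix_nonneg (src := src) (rng := rng) S i j])
    (fun q => by
      obtain ⟨e, he, rfl⟩ := hS q
      have := one_le_edgeMatrix (src := src) (rng := rng) he
      exact ⟨rng e, by linarith [hsplit (rng e) (src e)]⟩)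
    hk
  intro j
  have hB := pow_mulVec_le_pow_smul (edgeMatrix_nonneg Set.univ) hr hu (k + 1) j
  have := mulVec_apply_add_le hgap hu0 j
  simp only [Pi.smul_apply, smul_eq_mul] at hB ⊢
  linarith

end Words

section Paths

variable {V E : Type*} (src rng : E → V)

abbrev TwoSidedPath : Type _ := {x : ℤ → E // ∀ n, src (x (n + 1)) = rng (x n)}

def shift (x : TwoSidedPath src rng) : TwoSidedPath src rng :=
  ⟨fun n => x.1 (n + 1), fun n => x.2 (n + 1)⟩

def cylinder (k : ℤ) {n : ℕ} (w : Fin (n + 1) → E) : Set (TwoSidedPath src rng) :=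
  {x | ∀ i : Fin (n + 1), x.1 (k + (i.val : ℤ)) = w i}

def avoidsBefore (S : Set E) (t : ℤ) : Set (TwoSidedPath src rng) :=
  {x | ∀ z < t, x.1 z ∉ S}

variable {src rng}

theorem shift_preimage_avoidsBefore (S : Set E) (t : ℤ) :
    shift src rng ⁻¹' avoidsBefore src rng S t = avoidsBefore src rng S (t + 1) := by
  ext x
  simp only [Set.mem_preimage, avoidsBefore, shift, Set.mem_ofPred_eq]
  constructor
  · intro h z hz
    simpa using h (z - 1) (by omega)
  · intro h z hz
    exact h (z + 1) (by omega)

theorem setOf_finite_subset_iUnion_avoidsBefore (S : Set E) :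
    {x : TwoSidedPath src rng | {n : ℤ | n < 0 ∧ x.1 n ∈ S}.Finite} ⊆
      ⋃ t : ℤ, avoidsBefore src rng S t := by
  intro x hx
  obtain ⟨b, hb⟩ := hx.bddBelow
  refine Set.mem_iUnion.2 ⟨min b 0, fun z hz hzS => ?_⟩
  have := hb ⟨hz.trans_le (min_le_right b 0), hzS⟩
  omega

theorem avoidsBefore_zero_subset_iUnion_cylinder [Fintype E] (S : Set E) (n : ℕ) :
    avoidsBefore src rng S 0 ⊆ ⋃ w ∈ pathWords src rng Sᶜ n, cylinder src rng (-(n + 1)) w := by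
  intro x hx
  refine Set.mem_iUnion₂.2 ⟨fun i => x.1 (-(n + 1) + i), ?_, fun i => rfl⟩
  simp only [mem_pathWords, Fin.val_succ, Fin.val_castSucc]
  refine ⟨fun i => ?_, fun i => hx _ (by omega)⟩
  rw [Nat.cast_add, Nat.cast_one, ← add_assoc]
  exact x.2 _

variable [MeasurableSpace E]

theorem measurableSet_avoidsBefore [MeasurableSingletonClass E] [Finite E] (S : Set E) (t : ℤ) :
    MeasurableSet (avoidsBefore src rng S t) := by
  have : avoidsBefore src rng S t = ⋂ z : ℤ, ⋂ _ : z < t, (fun x => x.1 z) ⁻¹' Sᶜ := by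
    ext x
    simp [avoidsBefore]
  rw [this]
  exact .iInter fun z => .iInter fun _ =>
    ((measurable_pi_apply z).comp measurable_subtype_coe) (Set.toFinite _).measurableSet

theorem measure_avoidsBefore_eq [MeasurableSingletonClass E] [Finite E]
    (ν : Measure (TwoSidedPath src rng))
    (hinv : ∀ A, MeasurableSet A → ν (shift src rng ⁻¹' A) = ν A) (S : Set E) (t : ℤ) :
    ν (avoidsBefore src rng S t) = ν (avoidsBefore src rng S 0) := by
  have hstep (t : ℤ) : ν (avoidsBefore src rng S (t + 1)) = ν (avoidsBefore src rng S t) := by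
    rw [← shift_preimage_avoidsBefore, hinv _ (measurableSet_avoidsBefore S t)]
  induction t using Int.induction_on with
  | zero => rfl
  | succ t ih => rw [hstep, ih]
  | pred t ih => rw [← ih, ← hstep, sub_add_cancel]

def HasParryCylinders (ν : Measure (TwoSidedPath src rng)) (u v : V → ℝ) (r : ℝ) : Prop :=
  ∀ (k : ℤ) (n : ℕ) (w : Fin (n + 1) → E), (∀ i : Fin n, src (w i.succ) = rng (w i.castSucc)) →
    ν (cylinder src rng k w) =
      ENNReal.ofReal (u (src (w 0)) * v (rng (w (Fin.last n))) / r ^ (n + 1))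

variable [Fintype V] [DecidableEq V] [Fintype E] (ν : Measure (TwoSidedPath src rng))
  {u v : V → ℝ} {r : ℝ}

theorem measure_avoidsBefore_zero_le (hu : 0 ≤ u) (hv : 0 ≤ v) (hr : 0 ≤ r)
    (hcyl : HasParryCylinders ν u v r) (S : Set E) (n : ℕ) :
    ν (avoidsBefore src rng S 0) ≤
      ENNReal.ofReal (v ⬝ᵥ (edgeMatrix src rng ℝ Sᶜ ^ (n + 1) *ᵥ u) / r ^ (n + 1)) :=
  calc ν (avoidsBefore src rng S 0)
      ≤ ∑ w ∈ pathWords src rng Sᶜ n, ν (cylinder src rng (-(n + 1)) w) :=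
        (measure_mono (avoidsBefore_zero_subset_iUnion_cylinder S n)).trans
          (measure_biUnion_finset_le _ _)
    _ = ∑ w ∈ pathWords src rng Sᶜ n,
          ENNReal.ofReal (u (src (w 0)) * v (rng (w (Fin.last n))) / r ^ (n + 1)) :=
        sum_congr rfl fun w hw => hcyl _ n w (mem_pathWords.1 hw).1
    _ = ENNReal.ofReal (v ⬝ᵥ (edgeMatrix src rng ℝ Sᶜ ^ (n + 1) *ᵥ u) / r ^ (n + 1)) := by
        rw [← ENNReal.ofReal_sum_of_nonneg
            (fun w _ => div_nonneg (mul_nonneg (hu _) (hv _)) (pow_nonneg hr _)),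
          ← sum_div, sum_pathWords]

theorem measure_avoidsBefore_zero_eq_zero (hu : 0 ≤ u) (hv : 0 ≤ v) (hr : 0 < r)
    (hcyl : HasParryCylinders ν u v r)
    {S : Set E} {p : ℕ} {c : ℝ} (hc : 0 ≤ c) (hcr : c < r ^ (p + 1))
    (hG : edgeMatrix src rng ℝ Sᶜ ^ (p + 1) *ᵥ u ≤ c • u) :
    ν (avoidsBefore src rng S 0) = 0 := by
  have hrp : 0 < r ^ (p + 1) := pow_pos hr _
  set θ := c / r ^ (p + 1)
  have hbound (m : ℕ) :
      ν (avoidsBefore src rng S 0) ≤ ENNReal.ofReal (θ ^ (m + 1) * (v ⬝ᵥ u)) := by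
    refine (measure_avoidsBefore_zero_le ν hu hv hr.le hcyl S (p * (m + 1) + m)).trans
      (ENNReal.ofReal_le_ofReal ?_)
    rw [show p * (m + 1) + m + 1 = (p + 1) * (m + 1) by ring, pow_mul, pow_mul]
    calc v ⬝ᵥ ((edgeMatrix src rng ℝ Sᶜ ^ (p + 1)) ^ (m + 1) *ᵥ u) / (r ^ (p + 1)) ^ (m + 1)
        ≤ v ⬝ᵥ (c ^ (m + 1) • u) / (r ^ (p + 1)) ^ (m + 1) := by
          gcongr
          exact dotProduct_le_dotProduct_of_nonneg_left (pow_mulVec_le_pow_smul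
            (pow_apply_nonneg (edgeMatrix_nonneg Sᶜ) _) hc hG _) hv
      _ = θ ^ (m + 1) * (v ⬝ᵥ u) := by
          rw [dotProduct_smul, smul_eq_mul, div_pow]
          ring
  have hlim : Tendsto (fun m : ℕ => ENNReal.ofReal (θ ^ (m + 1) * (v ⬝ᵥ u))) atTop (𝓝 0) := by
    have := ((tendsto_pow_atTop_nhds_zero_of_lt_one (by positivity) ((div_lt_one hrp).2 hcr)).comp
      (tendsto_add_atTop_nat 1)).mul_const (v ⬝ᵥ u)
    simpa using ENNReal.tendsto_ofReal this
  exact le_antisymm (ge_of_tendsto' hlim hbound) zero_le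

end Paths

end EdgeShift

open EdgeShift in
theorem parry_measure_rare_distinguished_edges_general
    {V E : Type*} [Fintype V] [DecidableEq V] [Fintype E]
    [MeasurableSpace E] [MeasurableSingletonClass E]
    (src rng : E → V)
    (B : Matrix V V ℕ)
    (hcard : ∀ i j, Fintype.card {e : E // src e = i ∧ rng e = j} = B j i)
    (hprim : ∃ k : ℕ, 0 < k ∧ ∀ i j, 0 < (B ^ k) i j)
    (r : ℝ) (hr : 1 < r)
    (u v : V → ℝ) (hupos : ∀ Q, 0 < u Q) (hvpos : ∀ Q, 0 < v Q)
    (hu : ∀ j, ∑ i, u i * (B j i : ℝ) = r * u j)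
    (D : V → E) (hD : ∀ Q, src (D Q) = Q)
    (ν : Measure {x : ℤ → E // ∀ n, src (x (n + 1)) = rng (x n)})
    (hinv : ∀ A : Set {x : ℤ → E // ∀ n, src (x (n + 1)) = rng (x n)},
      MeasurableSet A →
      ν ((fun x : {x : ℤ → E // ∀ n, src (x (n + 1)) = rng (x n)} =>
          (⟨fun n => x.1 (n + 1), fun n => x.2 (n + 1)⟩ :
            {x : ℤ → E // ∀ n, src (x (n + 1)) = rng (x n)})) ⁻¹' A) = ν A)
    (hcyl : ∀ (k : ℤ) (n : ℕ) (wd : Fin (n + 1) → E),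
      (∀ i : Fin n, src (wd i.succ) = rng (wd i.castSucc)) →
      ν {x | ∀ i : Fin (n + 1), x.1 (k + (i.val : ℤ)) = wd i} =
        ENNReal.ofReal (u (src (wd 0)) * v (rng (wd (Fin.last n))) / r ^ (n + 1))) :
    ν {x : {x : ℤ → E // ∀ n, src (x (n + 1)) = rng (x n)} |
        {n : ℤ | n < 0 ∧ ∃ Q : V, x.1 n = D Q}.Finite} = 0 := by
  obtain ⟨k, -, hBk⟩ := hprim
  have hB : edgeMatrix src rng ℝ Set.univ = B.map Nat.cast := edgeMatrix_univ_eq_map hcard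
  have hBk' (i j : V) : 1 ≤ (edgeMatrix src rng ℝ Set.univ ^ k) i j := by
    rw [hB, ← Nat.coe_castRingHom, ← Matrix.map_pow]
    exact Nat.one_le_cast.2 (hBk i j)
  have hu' : edgeMatrix src rng ℝ Set.univ *ᵥ u = r • u := by
    ext j
    simp [hB, mulVec, dotProduct, ← hu j, mul_comm]
  set S : Set E := {e | ∃ Q, e = D Q}
  have hG := edgeMatrix_compl_pow_mulVec_le (S := S) (fun q => ⟨D q, ⟨q, rfl⟩, hD q⟩) hBk'
    (fun q => (hupos q).le) (by linarith) hu'.le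
  have h0 := measure_avoidsBefore_zero_eq_zero ν (fun q => (hupos q).le) (fun q => (hvpos q).le)
    (by linarith) hcyl (sub_nonneg.2 (one_le_pow₀ hr.le)) (sub_lt_self _ one_pos) hG
  refine measure_mono_null (setOf_finite_subset_iUnion_avoidsBefore S)
    (measure_iUnion_null fun t => ?_)
  rw [measure_avoidsBefore_eq ν hinv, h0]

/-- In the two-sided edge shift with Parry measure (cylinder masses
`u_{src(e_1)} v_{rng(e_n)} / r^n`, `B` primitive with `ρ(B) = r > 1` and each vertex
having at least two outgoing edges), if one distinguished outgoing edge `D Q` is fixed at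
each vertex `Q`, then the set of two-sided paths that use distinguished edges only
finitely many times among negative indices has Parry measure zero. -/
theorem parry_measure_rare_distinguished_edges
    {V E : Type*} [Fintype V] [DecidableEq V] [Fintype E] [DecidableEq E]
    [MeasurableSpace E] [MeasurableSingletonClass E]
    (src rng : E → V)
    (B : Matrix V V ℕ)
    (hcard : ∀ i j, Fintype.card {e : E // src e = i ∧ rng e = j} = B j i)
    (hprim : ∃ k : ℕ, 0 < k ∧ ∀ i j, 0 < (B ^ k) i j)
    (houtgoing : ∀ Q : V, 2 ≤ Fintype.card {e : E // src e = Q})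
    (r : ℝ) (hr : 1 < r)
    (u v : V → ℝ) (hupos : ∀ Q, 0 < u Q) (hvpos : ∀ Q, 0 < v Q)
    (hu : ∀ j, ∑ i, u i * (B j i : ℝ) = r * u j)
    (hv : ∀ i, ∑ j, (B j i : ℝ) * v j = r * v i)
    (hnorm : ∑ Q, u Q * v Q = 1)
    (D : V → E) (hD : ∀ Q, src (D Q) = Q)
    (ν : Measure {x : ℤ → E // ∀ n, src (x (n + 1)) = rng (x n)})
    (hprob : IsProbabilityMeasure ν)
    (hinv : ∀ A : Set {x : ℤ → E // ∀ n, src (x (n + 1)) = rng (x n)},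
      MeasurableSet A →
      ν ((fun x : {x : ℤ → E // ∀ n, src (x (n + 1)) = rng (x n)} =>
          (⟨fun n => x.1 (n + 1), fun n => x.2 (n + 1)⟩ :
            {x : ℤ → E // ∀ n, src (x (n + 1)) = rng (x n)})) ⁻¹' A) = ν A)
    (hcyl : ∀ (k : ℤ) (n : ℕ) (wd : Fin (n + 1) → E),
      (∀ i : Fin n, src (wd i.succ) = rng (wd i.castSucc)) →
      ν {x | ∀ i : Fin (n + 1), x.1 (k + (i.val : ℤ)) = wd i} =
        ENNReal.ofReal (u (src (wd 0)) * v (rng (wd (Fin.last n))) / r ^ (n + 1))) :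
    ν {x : {x : ℤ → E // ∀ n, src (x (n + 1)) = rng (x n)} |
        {n : ℤ | n < 0 ∧ ∃ Q : V, x.1 n = D Q}.Finite} = 0 :=
  parry_measure_rare_distinguished_edges_general src rng B hcard hprim r hr u v hupos hvpos hu D hD
    ν hinv hcyl
end

section
/- Let σ be an admissible substitution (matrix [[A,C],[0,B]], A, B primitive, ρ(A) > ρ(B) > 1) with tiling length |w|_𝒯 = ⟨ℓ̄(w), ξ⟩ for the normalized left PF eigenvector ξ. Then for every x in the substitution space X_σ, lim_{n→∞} |x[1,n]|_𝒯 / n = 1. -/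
/-!
Write `|w|_𝒯 = ∑ ξ` over the letters of `w` and `D_k(w) = |σ^k(w)| - r^k |w|_𝒯`. Since `ξ` is a
left eigenvector, `|σ(w)|_𝒯 = r |w|_𝒯`, so `D_k` is additive and `D_k(σ(v)) = D_{k+1}(v)`.
Peeling a subword of `σ^k(u)` one layer at a time (the accordion decomposition) shows that
`D_0(x[1,n]) = n - |x[1,n]|_𝒯` differs from `D_k(v)`, for a core `v` with `σ^k(v) ⊆ x[1,n]`,
by the defects of `2k` pieces of letter images, a bound `C_k` independent of `n`. As
`|σ^k(b)| / r^k → ξ_b > 0` for every letter, for large `k` one has `|D_k(v)| ≤ ε |σ^k(v)| ≤ ε n`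
uniformly in `v`, whence `|n - |x[1,n]|_𝒯| ≤ C_k + ε n`.
-/

open Filter Matrix

-- `List.count` on `κ ⊕ κ'` uses the derived `BEq` instance of `Sum`, not `instBEqOfDecidableEq`.
instance Sum.instLawfulBEq {α β : Type*} [BEq α] [LawfulBEq α] [BEq β] [LawfulBEq β] :
    LawfulBEq (α ⊕ β) where
  rfl {a} := by
    cases a with
    | inl a => exact beq_self_eq_true a
    | inr b => exact beq_self_eq_true b
  eq_of_beq {a b} h := by
    cases a <;> cases b
    all_goals first | exact congrArg _ (eq_of_beq h) | exact Bool.noConfusion h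

theorem Finset.sum_count_mul_eq_sum_map {α : Type*} [Fintype α] [BEq α] [LawfulBEq α]
    (ξ : α → ℝ) (w : List α) : ∑ i, (w.count i : ℝ) * ξ i = (w.map ξ).sum := by
  classical
  rw [Finset.sum_list_map_count, ← Finset.sum_subset (Finset.subset_univ w.toFinset)]
  · refine Finset.sum_congr rfl fun i _ => ?_
    rw [nsmul_eq_mul]
    congr!
  · intro i _ hi
    rw [List.count_eq_zero_of_not_mem (by simpa using hi)]
    simp

namespace List

variable {α : Type*}

theorem exists_eq_flatten_append_of_prefix_flatten {L : List (List α)} {p : List α}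
    (h : p <+: L.flatten) :
    ∃ m f, p = m.flatten ++ f ∧ m <+: L ∧ (f = [] ∨ ∃ l ∈ L, f <+: l) := by
  induction L generalizing p with
  | nil => exact ⟨[], [], by simpa using h, nil_prefix, Or.inl rfl⟩
  | cons a L ih =>
    rw [flatten_cons] at h
    rcases prefix_or_prefix_of_prefix h (prefix_append a _) with hpa | ⟨q, rfl⟩
    · exact ⟨[], p, by simp, nil_prefix, Or.inr ⟨a, mem_cons_self, hpa⟩⟩
    · obtain ⟨m, f, rfl, hm, hf⟩ := ih ((prefix_append_right_inj a).1 h)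
      refine ⟨a :: m, f, by simp, cons_prefix_cons.2 ⟨rfl, hm⟩, ?_⟩
      exact hf.imp_right fun ⟨l, hl, hfl⟩ => ⟨l, mem_cons_of_mem a hl, hfl⟩

theorem exists_eq_append_flatten_append_of_infix_flatten {L : List (List α)} {w : List α}
    (h : w <:+: L.flatten) :
    ∃ e m f, w = e ++ m.flatten ++ f ∧ m <:+: L ∧
      (e = [] ∨ ∃ l ∈ L, e <:+: l) ∧ (f = [] ∨ ∃ l ∈ L, f <:+: l) := by
  induction L with
  | nil => exact ⟨[], [], [], by simpa using h, nil_infix, Or.inl rfl, Or.inl rfl⟩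
  | cons a L ih =>
    rw [flatten_cons, infix_append_iff] at h
    rcases h with hwa | hwL | ⟨s, p, rfl, hs, hp⟩
    · exact ⟨w, [], [], by simp, nil_infix, Or.inr ⟨a, mem_cons_self, hwa⟩, Or.inl rfl⟩
    · obtain ⟨e, m, f, rfl, hm, he, hf⟩ := ih hwL
      have lift : ∀ {g : List α}, (g = [] ∨ ∃ l ∈ L, g <:+: l) →
          (g = [] ∨ ∃ l ∈ a :: L, g <:+: l) :=
        Or.imp_right fun ⟨l, hl, hgl⟩ => ⟨l, mem_cons_of_mem a hl, hgl⟩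
      exact ⟨e, m, f, rfl, infix_cons hm, lift he, lift hf⟩
    · obtain ⟨m, f, rfl, hm, hf⟩ := exists_eq_flatten_append_of_prefix_flatten hp
      refine ⟨s, m, f, by simp, infix_cons hm.isInfix, Or.inr ⟨a, mem_cons_self, hs.isInfix⟩, ?_⟩
      exact hf.imp_right fun ⟨l, hl, hfl⟩ => ⟨l, mem_cons_of_mem a hl, hfl.isInfix⟩

variable (σ : α → List α)

theorem exists_eq_append_flatMap_append_of_infix_flatMap {u w : List α}
    (h : w <:+: u.flatMap σ) :
    ∃ e v f, w = e ++ v.flatMap σ ++ f ∧ v <:+: u ∧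
      (e = [] ∨ ∃ b, e <:+: σ b) ∧ (f = [] ∨ ∃ b, f <:+: σ b) := by
  obtain ⟨e, m, f, rfl, hm, he, hf⟩ := exists_eq_append_flatten_append_of_infix_flatten h
  obtain ⟨v, hv, rfl⟩ := infix_map_iff.1 hm
  have piece : ∀ {g : List α}, (g = [] ∨ ∃ l ∈ u.map σ, g <:+: l) → (g = [] ∨ ∃ b, g <:+: σ b) :=
    Or.imp_right fun ⟨_, hl, hgl⟩ => by
      obtain ⟨b, -, rfl⟩ := mem_map.1 hl
      exact ⟨b, hgl⟩
  exact ⟨e, v, f, rfl, hv, piece he, piece hf⟩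

theorem iterate_flatMap_append (k : ℕ) (u v : List α) :
    (flatMap σ)^[k] (u ++ v) = (flatMap σ)^[k] u ++ (flatMap σ)^[k] v := by
  induction k generalizing u v with
  | zero => rfl
  | succ k ih => simp only [Function.iterate_succ_apply, flatMap_append, ih]

theorem IsInfix.iterate_flatMap {u v : List α} (h : u <:+: v) (k : ℕ) :
    (flatMap σ)^[k] u <:+: (flatMap σ)^[k] v := by
  obtain ⟨s, t, rfl⟩ := h
  rw [iterate_flatMap_append, iterate_flatMap_append]
  exact infix_append _ _ _

theorem length_iterate_flatMap_le {L : ℕ} (hL : ∀ b, (σ b).length ≤ L) (k : ℕ) (u : List α) :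
    ((flatMap σ)^[k] u).length ≤ L ^ k * u.length := by
  induction k generalizing u with
  | zero => simp
  | succ k ih =>
    have h₁ : (u.flatMap σ).length ≤ L * u.length := by
      rw [length_flatMap, mul_comm]
      simpa using sum_le_card_nsmul (u.map fun b => (σ b).length) L (by simpa using fun b _ => hL b)
    calc ((flatMap σ)^[k] (u.flatMap σ)).length ≤ L ^ k * (u.flatMap σ).length := ih _
      _ ≤ L ^ k * (L * u.length) := Nat.mul_le_mul_left _ h₁
      _ = L ^ (k + 1) * u.length := by ring

theorem exists_infix_iterate_flatMap_of_pow_lt_length {L k N : ℕ} (hL₁ : 1 ≤ L)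
    (hL : ∀ b, (σ b).length ≤ L) {a : α} {w : List α} (hw : w <:+: (flatMap σ)^[N] [a])
    (hlen : L ^ k < w.length) : ∃ u, w <:+: (flatMap σ)^[k] u := by
  -- `|σ^N(a)| ≤ L ^ N`, so a subword longer than `L ^ k` forces `k ≤ N`.
  have hkN : k ≤ N := by
    by_contra! hNk
    have hwN := hw.length_le.trans (length_iterate_flatMap_le σ hL N [a])
    rw [length_singleton, mul_one] at hwN
    have := Nat.pow_le_pow_right hL₁ hNk.le
    omega
  refine ⟨(flatMap σ)^[N - k] [a], ?_⟩
  rwa [← Function.iterate_add_apply, Nat.add_sub_cancel' hkN]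

end List

namespace Substitution

open List

variable {α : Type*} (σ : α → List α) (ξ : α → ℝ) (r : ℝ)

/-- `D_k(w) = |σ^k(w)| - r^k |w|_𝒯`, where `|w|_𝒯 = ∑ ξ` over the letters of `w`. -/
def lengthDefect (k : ℕ) (w : List α) : ℝ :=
  ((flatMap σ)^[k] w).length - r ^ k * (w.map ξ).sum

theorem lengthDefect_zero (w : List α) : lengthDefect σ ξ r 0 w = w.length - (w.map ξ).sum := by
  simp [lengthDefect]

theorem lengthDefect_nil (k : ℕ) : lengthDefect σ ξ r k [] = 0 := by
  simp [lengthDefect, Function.iterate_fixed (f := flatMap σ) flatMap_nil]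

theorem lengthDefect_singleton (k : ℕ) (b : α) :
    lengthDefect σ ξ r k [b] = ((flatMap σ)^[k] [b]).length - r ^ k * ξ b := by
  simp [lengthDefect]

theorem lengthDefect_append (k : ℕ) (u v : List α) :
    lengthDefect σ ξ r k (u ++ v) = lengthDefect σ ξ r k u + lengthDefect σ ξ r k v := by
  simp only [lengthDefect, iterate_flatMap_append, length_append, map_append, sum_append]
  push_cast
  ring

theorem sum_map_flatMap (hσξ : ∀ b, ((σ b).map ξ).sum = r * ξ b) (v : List α) :
    ((v.flatMap σ).map ξ).sum = r * (v.map ξ).sum := by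
  induction v with
  | nil => simp
  | cons b v ih => simp [map_append, sum_append, ih, hσξ, mul_add]

theorem lengthDefect_flatMap (hσξ : ∀ b, ((σ b).map ξ).sum = r * ξ b) (k : ℕ) (v : List α) :
    lengthDefect σ ξ r k (v.flatMap σ) = lengthDefect σ ξ r (k + 1) v := by
  simp only [lengthDefect, sum_map_flatMap σ ξ r hσξ, Function.iterate_succ_apply, pow_succ,
    mul_assoc]

theorem abs_lengthDefect_le_of_infix (hξ : ∀ b, 0 ≤ ξ b) (hr : 0 ≤ r) {e l : List α}
    (h : e <:+: l) (k : ℕ) :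
    |lengthDefect σ ξ r k e| ≤ ((flatMap σ)^[k] l).length + r ^ k * (l.map ξ).sum := by
  have hlen : (((flatMap σ)^[k] e).length : ℝ) ≤ ((flatMap σ)^[k] l).length := by
    exact_mod_cast (h.iterate_flatMap σ k).length_le
  have hsum : (e.map ξ).sum ≤ (l.map ξ).sum :=
    (h.sublist.map ξ).sum_le_sum (by simpa using fun b _ => hξ b)
  have he : 0 ≤ (e.map ξ).sum := sum_nonneg (by simpa using fun b _ => hξ b)
  rw [lengthDefect, abs_le]
  constructor <;> nlinarith [pow_nonneg hr k]

theorem exists_abs_lengthDefect_le_of_piece [Fintype α] (hξ : ∀ b, 0 ≤ ξ b) (hr : 0 ≤ r) :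
    ∃ c : ℕ → ℝ, ∀ k e, (e = [] ∨ ∃ b, e <:+: σ b) → |lengthDefect σ ξ r k e| ≤ c k := by
  refine ⟨fun k => ∑ b, ((((flatMap σ)^[k] (σ b)).length : ℝ) + r ^ k * ((σ b).map ξ).sum),
    fun k e he => ?_⟩
  have hterm : ∀ b, 0 ≤ ((((flatMap σ)^[k] (σ b)).length : ℝ) + r ^ k * ((σ b).map ξ).sum) :=
    fun b => by
      have := sum_nonneg (l := (σ b).map ξ) (by simpa using fun b _ => hξ b)
      positivity
  rcases he with rfl | ⟨b, hb⟩
  · rw [lengthDefect_nil, abs_zero]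
    exact Finset.sum_nonneg fun b _ => hterm b
  · exact (abs_lengthDefect_le_of_infix σ ξ r hξ hr hb k).trans
      (Finset.single_le_sum (fun b _ => hterm b) (Finset.mem_univ b))

/-- The accordion decomposition, peeled from the innermost layer: each layer contributes
the defects of one piece on each side. -/
theorem exists_infix_abs_sub_lengthDefect_le (hσξ : ∀ b, ((σ b).map ξ).sum = r * ξ b)
    {c : ℕ → ℝ} (hc : ∀ k e, (e = [] ∨ ∃ b, e <:+: σ b) → |lengthDefect σ ξ r k e| ≤ c k)
    (k : ℕ) {u w : List α} (hw : w <:+: (flatMap σ)^[k] u) :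
    ∃ v, v <:+: u ∧
      |lengthDefect σ ξ r 0 w - lengthDefect σ ξ r k v| ≤ ∑ i ∈ Finset.range k, 2 * c i ∧
      ((flatMap σ)^[k] v).length ≤ w.length := by
  induction k generalizing u with
  | zero => exact ⟨w, by simpa using hw, by simp, le_rfl⟩
  | succ k ih =>
    obtain ⟨v', hv', hD, hlen⟩ := ih (u := u.flatMap σ) hw
    obtain ⟨e, v, f, rfl, hv, he, hf⟩ := exists_eq_append_flatMap_append_of_infix_flatMap σ hv'
    refine ⟨v, hv, ?_, ?_⟩
    · have hce := abs_le.1 (hc k e he)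
      have hcf := abs_le.1 (hc k f hf)
      rw [lengthDefect_append, lengthDefect_append, lengthDefect_flatMap σ ξ r hσξ, abs_le] at hD
      rw [Finset.sum_range_succ, abs_le]
      constructor <;> linarith
    · rw [Function.iterate_succ_apply]
      exact le_trans ((infix_append e _ f).iterate_flatMap σ k).length_le hlen

theorem eventually_abs_lengthDefect_le [Finite α] (hr : 0 < r) (hξ : ∀ b, 0 < ξ b)
    (hlim : ∀ b, Tendsto (fun k : ℕ => (((flatMap σ)^[k] [b]).length : ℝ) / r ^ k) atTop
      (nhds (ξ b)))
    {ε : ℝ} (hε : 0 < ε) :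
    ∀ᶠ k in atTop, ∀ w, |lengthDefect σ ξ r k w| ≤ ε * ((flatMap σ)^[k] w).length := by
  have hletter : ∀ᶠ k in atTop, ∀ b,
      |lengthDefect σ ξ r k [b]| ≤ ε * ((flatMap σ)^[k] [b]).length := by
    refine eventually_all.2 fun b => ?_
    filter_upwards [((hlim b).sub_const (ξ b)).abs.eventually_lt ((hlim b).const_mul ε)
      (by simpa using mul_pos hε (hξ b))] with k hk
    have hrk : 0 < r ^ k := pow_pos hr k
    calc |lengthDefect σ ξ r k [b]|
        = r ^ k * |((flatMap σ)^[k] [b]).length / r ^ k - ξ b| := by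
          rw [lengthDefect_singleton, ← abs_of_pos hrk, ← abs_mul, abs_of_pos hrk]
          congr 1
          field_simp
      _ ≤ r ^ k * (ε * (((flatMap σ)^[k] [b]).length / r ^ k)) := by gcongr
      _ = ε * ((flatMap σ)^[k] [b]).length := by field_simp
  filter_upwards [hletter] with k hk w
  induction w with
  | nil => rw [lengthDefect_nil, abs_zero]; positivity
  | cons b w ih =>
    rw [← singleton_append, lengthDefect_append, iterate_flatMap_append, length_append,
      Nat.cast_add, mul_add]
    exact (abs_add_le _ _).trans (add_le_add (hk b) ih)

end Substitution

theorem tendsto_div_natCast_nhds_one_of_abs_sub_le {a : ℕ → ℝ}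
    (h : ∀ ε > 0, ∃ C, ∀ᶠ n in atTop, |a n - n| ≤ C + ε * n) :
    Tendsto (fun n => a n / n) atTop (nhds 1) := by
  have hlo : (fun n => a n - n) =o[atTop] (fun n : ℕ => (n : ℝ)) := by
    refine Asymptotics.isLittleO_iff.2 fun ε hε => ?_
    obtain ⟨C, hC⟩ := h (ε / 2) (by positivity)
    filter_upwards [hC, eventually_ge_atTop ⌈2 * C / ε⌉₊] with n hn hnC
    have hCn : 2 * C ≤ n * ε := (div_le_iff₀ hε).1 (Nat.ceil_le.1 hnC)
    rw [Real.norm_eq_abs, Real.norm_eq_abs, Nat.abs_cast]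
    linarith
  have hlim := hlo.tendsto_div_nhds_zero.const_add 1
  rw [add_zero] at hlim
  refine hlim.congr' ((eventually_ne_atTop 0).mono fun n hn => ?_)
  have : (n : ℝ) ≠ 0 := Nat.cast_ne_zero.2 hn
  field_simp
  ring

theorem tiling_length_of_prefix_asymptotics_general
    {κ κ' : Type*} [Fintype κ] [Fintype κ'] [DecidableEq κ] [DecidableEq κ']
    (σ : (κ ⊕ κ') → List (κ ⊕ κ'))
    (M : Matrix (κ ⊕ κ') (κ ⊕ κ') ℝ)
    (hM : ∀ i j, M i j = ((σ j).count i : ℝ))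
    (r : ℝ) (hr : 1 < r)
    (ξ : (κ ⊕ κ') → ℝ) (hξpos : ∀ i, 0 < ξ i)
    (heig : Matrix.vecMul ξ M = r • ξ)
    (hnorm : ∀ a, Tendsto
      (fun k : ℕ => (((fun l => (l.map σ).flatten)^[k] [a]).length : ℝ) / r ^ k)
      atTop (nhds (ξ a)))
    (x : ℤ → (κ ⊕ κ'))
    (hx : ∀ (p : ℤ) (n : ℕ), ∃ (a : κ ⊕ κ') (N : ℕ), 1 ≤ N ∧
      (List.ofFn fun i : Fin n => x (p + (i.val : ℤ))) <:+:
        (fun l => (l.map σ).flatten)^[N] [a]) :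
    Tendsto (fun n : ℕ =>
        (∑ i, (((List.ofFn fun j : Fin n => x (1 + (j.val : ℤ))).count i : ℝ) * ξ i)) /
          (n : ℝ))
      atTop (nhds 1) := by
  have hσξ : ∀ b, ((σ b).map ξ).sum = r * ξ b := fun b => by
    rw [← Finset.sum_count_mul_eq_sum_map, ← smul_eq_mul, ← Pi.smul_apply r ξ b, ← heig]
    simp only [vecMul, dotProduct, hM, mul_comm]
  have hr₀ : 0 < r := zero_lt_one.trans hr
  obtain ⟨L, hL⟩ := Finite.exists_le fun b => (σ b).length
  obtain ⟨c, hc⟩ :=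
    Substitution.exists_abs_lengthDefect_le_of_piece σ ξ r (fun b => (hξpos b).le) hr₀.le
  simp only [Finset.sum_count_mul_eq_sum_map]
  refine tendsto_div_natCast_nhds_one_of_abs_sub_le fun ε hε => ?_
  obtain ⟨k, hk⟩ := (Substitution.eventually_abs_lengthDefect_le σ ξ r hr₀ hξpos hnorm hε).exists
  refine ⟨∑ i ∈ Finset.range k, 2 * c i, ?_⟩
  filter_upwards [eventually_gt_atTop (max L 1 ^ k)] with n hn
  obtain ⟨a, N, -, hxN⟩ := hx 1 n
  obtain ⟨u, hu⟩ := List.exists_infix_iterate_flatMap_of_pow_lt_length σ (le_max_right L 1)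
    (fun b => (hL b).trans (le_max_left L 1)) hxN (by simpa using hn)
  obtain ⟨v, -, hD, hvw⟩ := Substitution.exists_infix_abs_sub_lengthDefect_le σ ξ r hσξ hc k hu
  rw [Substitution.lengthDefect_zero, List.length_ofFn] at hD
  have hvn : ε * ((List.flatMap σ)^[k] v).length ≤ ε * n := by
    gcongr
    simpa using hvw
  have hv := hk v
  rw [abs_le] at hD hv ⊢
  constructor <;> linarith

/-- For an admissible substitution `σ` on `κ ⊕ κ'` (matrix `[[A,C],[0,B]]`, `A`, `B`
primitive, `ρ(A) = r > ρ(B) > 1`) with tiling length `|w|_𝒯 = ⟨ℓ̄(w), ξ⟩` for the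
normalized left PF eigenvector `ξ` (so that `|σ^k(a)| / r^k → ξ_a`), every point `x`
of the substitution space satisfies `|x[1,n]|_𝒯 / n → 1` as `n → ∞`. -/
theorem tiling_length_of_prefix_asymptotics
    {κ κ' : Type*} [Fintype κ] [Fintype κ'] [DecidableEq κ] [DecidableEq κ']
    [Nonempty κ] [Nonempty κ']
    (σ : (κ ⊕ κ') → List (κ ⊕ κ')) (hσ : ∀ a, σ a ≠ [])
    (M : Matrix (κ ⊕ κ') (κ ⊕ κ') ℝ)
    (hM : ∀ i j, M i j = ((σ j).count i : ℝ))
    (hblock : ∀ (b : κ') (a : κ), M (Sum.inr b) (Sum.inl a) = 0)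
    (hAprim : ∃ k : ℕ, 0 < k ∧ ∀ i j, 0 < ((M.submatrix Sum.inl Sum.inl) ^ k) i j)
    (hBprim : ∃ k : ℕ, 0 < k ∧ ∀ i j, 0 < ((M.submatrix Sum.inr Sum.inr) ^ k) i j)
    (r : ℝ) (hr : 1 < r)
    (hrA : (r : ℂ) ∈ spectrum ℂ ((M.submatrix Sum.inl Sum.inl).map Complex.ofReal))
    (hrmax : ∀ z ∈ spectrum ℂ (M.map Complex.ofReal), ‖z‖ ≤ r)
    (hBlt : ∀ z ∈ spectrum ℂ ((M.submatrix Sum.inr Sum.inr).map Complex.ofReal),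
      ‖z‖ < r)
    (hBgt : ∃ z ∈ spectrum ℂ ((M.submatrix Sum.inr Sum.inr).map Complex.ofReal),
      1 < ‖z‖)
    (ξ : (κ ⊕ κ') → ℝ) (hξpos : ∀ i, 0 < ξ i)
    (heig : Matrix.vecMul ξ M = r • ξ)
    (hnorm : ∀ a, Tendsto
      (fun k : ℕ => (((fun l => (l.map σ).flatten)^[k] [a]).length : ℝ) / r ^ k)
      atTop (nhds (ξ a)))
    (x : ℤ → (κ ⊕ κ'))
    (hx : ∀ (p : ℤ) (n : ℕ), ∃ (a : κ ⊕ κ') (N : ℕ), 1 ≤ N ∧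
      (List.ofFn fun i : Fin n => x (p + (i.val : ℤ))) <:+:
        (fun l => (l.map σ).flatten)^[N] [a]) :
    Tendsto (fun n : ℕ =>
        (∑ i, (((List.ofFn fun j : Fin n => x (1 + (j.val : ℤ))).count i : ℝ) * ξ i)) /
          (n : ℝ))
      atTop (nhds 1) :=
  tiling_length_of_prefix_asymptotics_general σ M hM r hr ξ hξpos heig hnorm x hx
end
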